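/- Let S̄ be an n-slice of the finite group G and p a prime. Then there exists an n-slice K̄ = (K_0,…,K_n) of G such that p does not divide [N_G(K̄):K_0] and m(S̄,T̄) ≡ m(K̄,T̄) (mod p) for every n-slice T̄ of G; moreover K̄ is unique up to conjugacy in G. -/

import Mathlib

variable {G : Type*}

/-- The conjugate slice `ᵍS̄ = (gS₀g⁻¹, …, gSₙg⁻¹)`. -/
def sliceConj [Group G] {n : ℕ} (g : G) (S : Fin (n + 1) → Subgroup G) :
    Fin (n + 1) → Subgroup G :=
  fun i => (S i).map (MulAut.conj g).toMonoidHom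

/-- The mark `m(K̄,S̄) = |{gS₀ ∈ G/S₀ : g⁻¹Kᵢg ≤ Sᵢ for all i}|`. -/
noncomputable def mark [Group G] {n : ℕ} (K S : Fin (n + 1) → Subgroup G) : ℕ :=
  Nat.card {x : G ⧸ S 0 //
    ∃ g : G, QuotientGroup.mk g = x ∧ ∀ i, ∀ k ∈ K i, g⁻¹ * k * g ∈ S i}

/-- The normalizer `N_G(S̄) = ⋂ᵢ N_G(Sᵢ)` of a slice. -/
def sliceNormalizer [Group G] {n : ℕ} (S : Fin (n + 1) → Subgroup G) : Subgroup G :=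
  ⨅ i, Subgroup.normalizer (S i : Set G)

/-- The index `[N_G(S̄) : S₀]`. -/
noncomputable def sliceIndex [Group G] {n : ℕ} (S : Fin (n + 1) → Subgroup G) : ℕ :=
  (S 0).relIndex (sliceNormalizer S)

/-! A `p`-group `P` normalizing every `Kᵢ` acts on the cosets counted by `m(K̄,T̄)`, and its
fixed points are exactly the cosets counted by `m(K̄ ⊔ P, T̄)`; hence enlarging `K̄` by `P` does
not change any mark mod `p`. While `p ∣ [N_G(K̄):K₀]`, a Sylow `p`-subgroup of `N_G(K̄)` is not
contained in `K₀`, so such enlargements strictly grow the slice until `p ∤ [N_G(K̄):K₀]`.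
For such `K̄` we have `m(K̄,K̄) = [N_G(K̄):K₀] ≢ 0 (mod p)`, so two solutions `K̄, K̄'` have
nonzero marks on each other: each is subconjugate to the other, hence they are conjugate. -/

open Subgroup

section

variable [Group G]

lemma Subgroup.mem_map_conj_iff {H : Subgroup G} {g k : G} :
    k ∈ H.map (MulAut.conj g).toMonoidHom ↔ g⁻¹ * k * g ∈ H := by
  rw [mem_map_equiv, MulAut.conj_symm_apply]

lemma Subgroup.card_map_conj (H : Subgroup G) (g : G) :
    Nat.card (H.map (MulAut.conj g).toMonoidHom) = Nat.card H :=
  card_map_of_injective (MulAut.conj g).injective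

lemma QuotientGroup.smul_mk_eq_mk_iff {H : Subgroup G} {c g : G} :
    c • (g : G ⧸ H) = g ↔ c ∈ H.map (MulAut.conj g).toMonoidHom := by
  rw [mem_map_conj_iff, ← inv_mem_iff]
  exact QuotientGroup.eq.trans (by simp [mul_assoc])

lemma QuotientGroup.preimage_image_mk_of_le {H K : Subgroup G} (h : H ≤ K) :
    QuotientGroup.mk ⁻¹' ((QuotientGroup.mk : G → G ⧸ H) '' K) = K := by
  refine subset_antisymm ?_ (Set.subset_preimage_image _ _)
  rintro g ⟨k, hk, hkg⟩
  have : k⁻¹ * g ∈ K := h (QuotientGroup.eq.mp hkg)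
  simpa using K.mul_mem hk this

lemma Subgroup.card_image_mk_eq_relIndex [Finite G] {H K : Subgroup G} (h : H ≤ K) :
    Nat.card ((QuotientGroup.mk : G → G ⧸ H) '' K) = H.relIndex K := by
  have hK : Nat.card H * Nat.card ((QuotientGroup.mk : G → G ⧸ H) '' K) = Nat.card K := by
    rw [← QuotientGroup.card_preimage_mk, QuotientGroup.preimage_image_mk_of_le h]; rfl
  have hrel : Nat.card H * H.relIndex K = Nat.card K := by
    rw [← relIndex_bot_left, relIndex_mul_relIndex _ _ _ bot_le h, relIndex_bot_left]
  exact Nat.eq_of_mul_eq_mul_left Nat.card_pos (hK.trans hrel.symm)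

lemma Subgroup.exists_isPGroup_le_not_le_of_dvd_relIndex [Finite G] {p : ℕ} [Fact p.Prime]
    {H K : Subgroup G} (hdvd : p ∣ H.relIndex K) :
    ∃ P : Subgroup G, IsPGroup p P ∧ P ≤ K ∧ ¬P ≤ H := by
  obtain ⟨Q⟩ : Nonempty (Sylow p K) := inferInstance
  refine ⟨Q.map K.subtype, Q.isPGroup'.map _, map_subtype_le _, fun hle => ?_⟩
  refine Q.not_dvd_index (hdvd.trans (index_dvd_of_le fun q hq => ?_))
  exact mem_subgroupOf.mpr (hle (mem_map_of_mem _ hq))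

end

section Slices

variable [Group G] {n : ℕ}

lemma le_sliceConj_iff {K T : Fin (n + 1) → Subgroup G} {g : G} :
    K ≤ sliceConj g T ↔ ∀ i, ∀ k ∈ K i, g⁻¹ * k * g ∈ T i := by
  simp only [Pi.le_def, SetLike.le_def, sliceConj, mem_map_conj_iff]

@[simp]
lemma sliceConj_one (T : Fin (n + 1) → Subgroup G) : sliceConj 1 T = T := by
  ext i k
  simp [sliceConj]

lemma sliceConj_mul (g h : G) (T : Fin (n + 1) → Subgroup G) :
    sliceConj (g * h) T = sliceConj g (sliceConj h T) := by
  ext i k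
  simp [sliceConj, mul_assoc]

lemma sliceConj_mono (g : G) {K L : Fin (n + 1) → Subgroup G} (h : K ≤ L) :
    sliceConj g K ≤ sliceConj g L :=
  fun i => map_mono (h i)

lemma sliceConj_eq_self_iff {K : Fin (n + 1) → Subgroup G} {g : G} :
    sliceConj g K = K ↔ g ∈ sliceNormalizer K := by
  simp only [funext_iff, sliceConj, sliceNormalizer, mem_iInf, mem_normalizer_iff_map_conj_eq]
  rfl

lemma sliceConj_eq_of_le_of_le [Finite G] {K L : Fin (n + 1) → Subgroup G} {g h : G}
    (hg : L ≤ sliceConj g K) (hh : K ≤ sliceConj h L) : sliceConj g K = L := by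
  funext i
  refine (eq_of_le_of_card_ge (hg i) ?_).symm
  calc Nat.card (sliceConj g K i) = Nat.card (K i) := card_map_conj _ _
    _ ≤ Nat.card (sliceConj h L i) := card_le_of_le (hh i)
    _ = Nat.card (L i) := card_map_conj _ _

lemma le_sliceConj_self_iff [Finite G] {K : Fin (n + 1) → Subgroup G} {g : G} :
    K ≤ sliceConj g K ↔ g ∈ sliceNormalizer K :=
  ⟨fun h => sliceConj_eq_self_iff.mp (sliceConj_eq_of_le_of_le h (sliceConj_one K).ge),
    fun h => (sliceConj_eq_self_iff.mpr h).ge⟩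

lemma le_sliceNormalizer {K : Fin (n + 1) → Subgroup G} (hK : Monotone K) :
    K 0 ≤ sliceNormalizer K :=
  le_iInf fun i => (hK (Fin.zero_le i)).trans le_normalizer

def markSet (K T : Fin (n + 1) → Subgroup G) : Set (G ⧸ T 0) :=
  (↑) '' {g : G | K ≤ sliceConj g T}

lemma mark_eq_card_markSet (K T : Fin (n + 1) → Subgroup G) :
    mark K T = Nat.card (markSet K T) := by
  simp only [mark, markSet, ← le_sliceConj_iff]
  exact Nat.card_congr (Equiv.subtypeEquivRight fun x => by simp [and_comm])

lemma mark_self [Finite G] {K : Fin (n + 1) → Subgroup G} (hK : Monotone K) :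
    mark K K = sliceIndex K := by
  have hset : {g : G | K ≤ sliceConj g K} = sliceNormalizer K := by
    ext g; exact le_sliceConj_self_iff
  rw [mark_eq_card_markSet, markSet, hset, sliceIndex,
    card_image_mk_eq_relIndex (le_sliceNormalizer hK)]

lemma exists_le_sliceConj_of_mark_ne_zero {K T : Fin (n + 1) → Subgroup G} (h : mark K T ≠ 0) :
    ∃ g : G, K ≤ sliceConj g T := by
  rw [mark_eq_card_markSet] at h
  obtain ⟨_, g, hg, -⟩ := (Nat.card_ne_zero.mp h).1
  exact ⟨g, hg⟩

lemma mark_ne_zero_of_modEq_mark_self {p : ℕ} [Finite G] {K L : Fin (n + 1) → Subgroup G}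
    (hK : Monotone K) (hKp : ¬p ∣ sliceIndex K) (h : mark K K ≡ mark L K [MOD p]) :
    mark L K ≠ 0 := by
  intro h0
  rw [h0, mark_self hK] at h
  exact hKp (Nat.modEq_zero_iff_dvd.mp h)

lemma markSet_smul_mem {K T : Fin (n + 1) → Subgroup G} {c : G} (hc : c ∈ sliceNormalizer K)
    {x : G ⧸ T 0} (hx : x ∈ markSet K T) : c • x ∈ markSet K T := by
  obtain ⟨g, hg, rfl⟩ := hx
  refine ⟨c * g, ?_, rfl⟩
  calc K = sliceConj c K := (sliceConj_eq_self_iff.mpr hc).symm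
    _ ≤ sliceConj c (sliceConj g T) := sliceConj_mono c hg
    _ = sliceConj (c * g) T := (sliceConj_mul c g T).symm

lemma markSet_sup_const {K T : Fin (n + 1) → Subgroup G} (hT : Monotone T) (P : Subgroup G) :
    markSet (K ⊔ fun _ => P) T = {x ∈ markSet K T | ∀ c ∈ P, c • x = x} := by
  have hP : ∀ g : G, (fun _ => P) ≤ sliceConj g T ↔ ∀ c ∈ P, c • (g : G ⧸ T 0) = g := by
    intro g
    simp only [QuotientGroup.smul_mk_eq_mk_iff]
    exact ⟨fun h => h 0,
      fun h i => le_trans (b := sliceConj g T 0) h (map_mono (hT (Fin.zero_le i)))⟩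
  ext x
  constructor
  · rintro ⟨g, hg, rfl⟩
    exact ⟨⟨g, show K ≤ _ from le_sup_left.trans hg, rfl⟩, (hP g).mp (le_sup_right.trans hg)⟩
  · rintro ⟨⟨g, hg, rfl⟩, hfix⟩
    exact ⟨g, sup_le hg ((hP g).mpr hfix), rfl⟩

lemma mark_modEq_mark_sup [Finite G] {p : ℕ} [Fact p.Prime] {K T : Fin (n + 1) → Subgroup G}
    {P : Subgroup G} (hPp : IsPGroup p P) (hPK : P ≤ sliceNormalizer K) (hT : Monotone T) :
    mark K T ≡ mark (K ⊔ fun _ => P) T [MOD p] := by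
  let S : SubMulAction P (G ⧸ T 0) :=
    { carrier := markSet K T
      smul_mem' := fun c _ hx => markSet_smul_mem (hPK c.2) hx }
  have hfix : Nat.card (MulAction.fixedPoints P S) = Nat.card (markSet (K ⊔ fun _ => P) T) := by
    rw [markSet_sup_const hT]
    refine Nat.card_congr ((Equiv.subtypeEquivRight fun y => ?_).trans
      (Equiv.subtypeSubtypeEquivSubtypeInter (· ∈ markSet K T) _))
    simp only [MulAction.mem_fixedPoints, Subtype.ext_iff, SubMulAction.val_smul, Subtype.forall]
    rfl
  rw [mark_eq_card_markSet, mark_eq_card_markSet, ← hfix]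
  exact hPp.card_modEq_card_fixedPoints S

lemma exists_not_dvd_sliceIndex_mark_modEq [Finite G] (p : ℕ) [Fact p.Prime]
    (K : Fin (n + 1) → Subgroup G) (hK : Monotone K) :
    ∃ L : Fin (n + 1) → Subgroup G, Monotone L ∧ ¬p ∣ sliceIndex L ∧
      ∀ T : Fin (n + 1) → Subgroup G, Monotone T → mark K T ≡ mark L T [MOD p] := by
  induction K using WellFoundedGT.induction with
  | _ K ih =>
    by_cases hdvd : p ∣ sliceIndex K
    · obtain ⟨P, hPp, hPK, hPK0⟩ := exists_isPGroup_le_not_le_of_dvd_relIndex hdvd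
      have hlt : K < K ⊔ fun _ => P := lt_of_le_of_ne le_sup_left fun h =>
        hPK0 ((le_sup_right (a := K 0)).trans (congrFun h 0).ge)
      obtain ⟨L, hL, hLp, hmark⟩ := ih _ hlt (hK.sup monotone_const)
      exact ⟨L, hL, hLp, fun T hT => (mark_modEq_mark_sup hPp hPK hT).trans (hmark T hT)⟩
    · exact ⟨K, hK, hdvd, fun _ _ => rfl⟩

end Slices

/-- for a slice `S̄` and a prime `p` there is an `n`-slice `K̄`,
unique up to conjugacy, with `p ∤ [N_G(K̄):K₀]` and
`m(S̄,T̄) ≡ m(K̄,T̄) (mod p)` for every `n`-slice `T̄`. -/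
theorem exists_p_closure_slice {n : ℕ} [Group G] [Finite G]
    (p : ℕ) (hp : p.Prime)
    (S : Fin (n + 1) → Subgroup G) (hS : Monotone S) :
    ∃ K : Fin (n + 1) → Subgroup G, Monotone K ∧
      ¬(p ∣ sliceIndex K) ∧
      (∀ T : Fin (n + 1) → Subgroup G, Monotone T → mark S T ≡ mark K T [MOD p]) ∧
      ∀ K' : Fin (n + 1) → Subgroup G, Monotone K' →
        ¬(p ∣ sliceIndex K') →
        (∀ T : Fin (n + 1) → Subgroup G, Monotone T → mark S T ≡ mark K' T [MOD p]) →
        ∃ g : G, sliceConj g K = K' := by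
  have := Fact.mk hp
  obtain ⟨K, hK, hKp, hSK⟩ := exists_not_dvd_sliceIndex_mark_modEq p S hS
  refine ⟨K, hK, hKp, hSK, fun K' hK' hK'p hSK' => ?_⟩
  have hKK' (T) (hT : Monotone T) : mark K T ≡ mark K' T [MOD p] :=
    (hSK T hT).symm.trans (hSK' T hT)
  obtain ⟨g, hg⟩ := exists_le_sliceConj_of_mark_ne_zero
    (mark_ne_zero_of_modEq_mark_self hK hKp (hKK' K hK))
  obtain ⟨h, hh⟩ := exists_le_sliceConj_of_mark_ne_zero
    (mark_ne_zero_of_modEq_mark_self hK' hK'p (hKK' K' hK').symm)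
  exact ⟨g, sliceConj_eq_of_le_of_le hg hh⟩
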